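/- arXiv:2201.05365 — 2 statements merged into one kernel-verified Lean document; each statement's English description precedes it below -/
import Mathlib

section
/- A preteam ({H_a : a ∈ A}, H) is a strict team if and only if for every a ∈ A and every hyperedge e of H_a, the set e is connected in H. -/
/-! Basic hypergraph notions (following Došen–Petrić / Curien–Obradović–Ivanović). -/

variable {α : Type*}

/-- `ConnIn E X`: the restriction of the edge set `E` to `X` is connected, i.e. every
nontrivial partition of `X` is crossed by an edge of `E` lying inside `X`. -/
def ConnIn (E : Set (Set α)) (X : Set α) : Prop :=
  ∀ X₁ X₂ : Set α, X₁ ∪ X₂ = X → Disjoint X₁ X₂ → X₁.Nonempty → X₂.Nonempty →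
    ∃ e ∈ E, e ⊆ X ∧ ¬ e ⊆ X₁ ∧ ¬ e ⊆ X₂

/-- An atomic hypergraph: a carrier set together with a set of nonempty hyperedges covering
the carrier and containing all singletons. -/
structure AHypergraph (α : Type*) where
  carrier : Set α
  edges : Set (Set α)
  edges_nonempty : ∀ e ∈ edges, e.Nonempty
  edges_sub : ∀ e ∈ edges, e ⊆ carrier
  atomic : ∀ x ∈ carrier, {x} ∈ edges

/-- A subset `X` is connected in the hypergraph `G`. -/
def AHypergraph.ConnectedIn (G : AHypergraph α) (X : Set α) : Prop := ConnIn G.edges X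

/-- The hypergraph `G` is connected. -/
def AHypergraph.Connected (G : AHypergraph α) : Prop := G.ConnectedIn G.carrier

/-- Restriction of a hypergraph to a subset. -/
def AHypergraph.restrict (G : AHypergraph α) (X : Set α) : AHypergraph α where
  carrier := G.carrier ∩ X
  edges := {e | e ∈ G.edges ∧ e ⊆ X}
  edges_nonempty := fun e he => G.edges_nonempty e he.1
  edges_sub := fun e he => Set.subset_inter (G.edges_sub e he.1) he.2
  atomic := fun x hx => ⟨G.atomic x hx.1, Set.singleton_subset_iff.2 hx.2⟩

/-- `Y` is a connected component of the hypergraph `G`: a maximal nonempty connected subset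
of the carrier. -/
def IsCC (G : AHypergraph α) (Y : Set α) : Prop :=
  Y.Nonempty ∧ Y ⊆ G.carrier ∧ G.ConnectedIn Y ∧
    ∀ Z, Y ⊆ Z → Z ⊆ G.carrier → G.ConnectedIn Z → Z = Y

/-- A preteam: a finite family of pairwise disjoint connected participating hypergraphs
whose carriers partition the carrier of a connected coordinating hypergraph. -/
structure Preteam (α : Type*) (A : Type*) where
  part : A → AHypergraph α
  coord : AHypergraph α
  finite : coord.carrier.Finite
  part_connected : ∀ a, (part a).Connected
  coord_connected : coord.Connected
  part_nonempty : ∀ a, (part a).carrier.Nonempty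
  disj : Pairwise fun a b => Disjoint (part a).carrier (part b).carrier
  union : (⋃ a, (part a).carrier) = coord.carrier

/-- The coordinating hypergraph with the roots `⋃_{b ∈ B} X b` removed. -/
def Preteam.removed {α A : Type*} (τ : Preteam α A) (B : Set A) (X : A → Set α) :
    AHypergraph α :=
  τ.coord.restrict (τ.coord.carrier \ ⋃ b ∈ B, X b)

/-- A preteam is a strict team if, for each nonempty `B ⊆ A` and nonempty `X b ⊆ H_b`
(`b ∈ B`), the carrier of each participating hypergraph with `a ∉ B`, and each connected
component of `H_b` minus `X b` (`b ∈ B`), is included in a single connected component of the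
coordinating hypergraph minus `⋃_{b ∈ B} X b`. -/
def Preteam.IsStrictTeam {α A : Type*} (τ : Preteam α A) : Prop :=
  ∀ (B : Set A) (X : A → Set α), B.Nonempty →
    (∀ b ∈ B, (X b).Nonempty ∧ X b ⊆ (τ.part b).carrier) →
    (∀ a ∉ B, ∃ Y, IsCC (τ.removed B X) Y ∧ (τ.part a).carrier ⊆ Y) ∧
    (∀ b ∈ B, ∀ C, IsCC ((τ.part b).restrict ((τ.part b).carrier \ X b)) C →
      ∃ Y, IsCC (τ.removed B X) Y ∧ C ⊆ Y)

/-! Removing the roots `X` leaves an edge of a participant connected as soon as it was connected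
in the coordinating hypergraph and avoids `X`, so every part of a participant that is connected
there and avoids `X` lies in one component. Conversely, taking as roots everything outside a
given edge `e` of `H_a` leaves exactly `e`, and the team condition makes `e` a component. -/

lemma connIn_of_mem {E : Set (Set α)} {e : Set α} (he : e ∈ E) : ConnIn E e := by
  intro X₁ X₂ hu hd h₁ h₂
  refine ⟨e, he, subset_rfl, fun h => ?_, fun h => ?_⟩
  · obtain ⟨x, hx⟩ := h₂
    exact hd.ne_of_mem (h (hu ▸ Or.inr hx)) hx rfl
  · obtain ⟨x, hx⟩ := h₁
    exact hd.ne_of_mem hx (h (hu ▸ Or.inl hx)) rfl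

lemma ConnIn.of_connIn_edges {E F : Set (Set α)} {S : Set α} (h : ConnIn E S)
    (hEF : ∀ e ∈ E, e ⊆ S → ConnIn F e) : ConnIn F S := by
  intro X₁ X₂ hu hd h₁ h₂
  obtain ⟨e, heE, heS, he₁, he₂⟩ := h X₁ X₂ hu hd h₁ h₂
  have hsub : e ⊆ X₁ ∪ X₂ := hu ▸ heS
  have hmeet₁ : (e ∩ X₁).Nonempty := by
    obtain ⟨x, hx, hx₂⟩ := Set.not_subset.1 he₂
    exact ⟨x, hx, (hsub hx).resolve_right hx₂⟩
  have hmeet₂ : (e ∩ X₂).Nonempty := by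
    obtain ⟨x, hx, hx₁⟩ := Set.not_subset.1 he₁
    exact ⟨x, hx, (hsub hx).resolve_left hx₁⟩
  obtain ⟨f, hfF, hfe, hf₁, hf₂⟩ := hEF e heE heS (e ∩ X₁) (e ∩ X₂)
    (by rw [← Set.inter_union_distrib_left, Set.inter_eq_left.2 hsub])
    (hd.mono Set.inter_subset_right Set.inter_subset_right) hmeet₁ hmeet₂
  exact ⟨f, hfF, hfe.trans heS, fun h => hf₁ fun x hx => ⟨hfe hx, h hx⟩,
    fun h => hf₂ fun x hx => ⟨hfe hx, h hx⟩⟩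

lemma ConnIn.mono_edges {E F : Set (Set α)} {S : Set α} (h : ConnIn E S)
    (hEF : ∀ e ∈ E, e ⊆ S → e ∈ F) : ConnIn F S :=
  h.of_connIn_edges fun e he heS => connIn_of_mem (hEF e he heS)

lemma AHypergraph.exists_isCC_superset (G : AHypergraph α) (hfin : G.carrier.Finite)
    {S : Set α} (hne : S.Nonempty) (hsub : S ⊆ G.carrier) (hconn : G.ConnectedIn S) :
    ∃ Y, IsCC G Y ∧ S ⊆ Y := by
  have hfinS : {Z : Set α | S ⊆ Z ∧ Z ⊆ G.carrier ∧ G.ConnectedIn Z}.Finite :=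
    hfin.finite_subsets.subset fun Z hZ => hZ.2.1
  obtain ⟨Y, hY, hmax⟩ := hfinS.exists_maximalFor id _ ⟨S, subset_rfl, hsub, hconn⟩
  refine ⟨Y, ⟨hne.mono hY.1, hY.2.1, hY.2.2, fun Z hYZ hZ hZconn => ?_⟩, hY.1⟩
  exact (hmax ⟨hY.1.trans hYZ, hZ, hZconn⟩ hYZ).antisymm hYZ

namespace Preteam

variable {A : Type*} (τ : Preteam α A)

lemma part_carrier_subset (a : A) : (τ.part a).carrier ⊆ τ.coord.carrier :=
  τ.union ▸ Set.subset_iUnion (fun b => (τ.part b).carrier) a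

lemma removed_carrier (B : Set A) (X : A → Set α) :
    (τ.removed B X).carrier = τ.coord.carrier \ ⋃ b ∈ B, X b :=
  Set.inter_eq_right.2 Set.sdiff_subset

lemma exists_isCC_removed_superset
    (hedges : ∀ a, ∀ e ∈ (τ.part a).edges, τ.coord.ConnectedIn e) {B : Set A} {X : A → Set α}
    {a : A} {S : Set α} (hne : S.Nonempty) (hSa : S ⊆ (τ.part a).carrier)
    (hS : (τ.part a).ConnectedIn S) (hSX : ∀ b ∈ B, Disjoint S (X b)) :
    ∃ Y, IsCC (τ.removed B X) Y ∧ S ⊆ Y := by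
  have hsub : S ⊆ (τ.removed B X).carrier := by
    intro x hx
    rw [removed_carrier]
    refine ⟨τ.part_carrier_subset a (hSa hx), ?_⟩
    simp only [Set.mem_iUnion, not_exists]
    exact fun b hb hxb => (hSX b hb).ne_of_mem hx hxb rfl
  have hconn : (τ.removed B X).ConnectedIn S :=
    ConnIn.of_connIn_edges hS fun f hf hfS =>
      (hedges a f hf).mono_edges fun g hg hgf =>
        ⟨hg, (hgf.trans (hfS.trans hsub)).trans Set.inter_subset_right⟩
  exact (τ.removed B X).exists_isCC_superset (τ.finite.subset Set.inter_subset_left) hne hsub hconn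

lemma isStrictTeam_of_connectedIn_edges
    (hedges : ∀ a, ∀ e ∈ (τ.part a).edges, τ.coord.ConnectedIn e) : τ.IsStrictTeam := by
  intro B X _ hX
  constructor
  · intro a ha
    refine τ.exists_isCC_removed_superset hedges (τ.part_nonempty a) subset_rfl
      (τ.part_connected a) fun b hb => ?_
    exact (τ.disj fun hab : a = b => ha (hab ▸ hb)).mono_right (hX b hb).2
  · rintro b - C ⟨hCne, hCsub, hCconn, -⟩
    have hCX : C ⊆ (τ.part b).carrier \ X b := hCsub.trans Set.inter_subset_right
    refine τ.exists_isCC_removed_superset hedges hCne (hCX.trans Set.sdiff_subset)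
      (hCconn.mono_edges fun f hf _ => hf.1) fun b' hb' => ?_
    rcases eq_or_ne b b' with rfl | hbb'
    · exact Set.disjoint_left.2 fun x hx => (hCX hx).2
    · exact (τ.disj hbb').mono (hCX.trans Set.sdiff_subset) (hX b' hb').2

variable {τ}

lemma IsStrictTeam.exists_isCC_superset_of_mem_edges (h : τ.IsStrictTeam) {B : Set A}
    {X : A → Set α} (hB : B.Nonempty) (hX : ∀ b ∈ B, (X b).Nonempty ∧ X b ⊆ (τ.part b).carrier)
    {a : A} {e : Set α} (he : e ∈ (τ.part a).edges) (heX : Disjoint e (X a)) :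
    ∃ Y, IsCC (τ.removed B X) Y ∧ e ⊆ Y := by
  have heHa := (τ.part a).edges_sub e he
  by_cases ha : a ∈ B
  · set G := (τ.part a).restrict ((τ.part a).carrier \ X a)
    have heG : e ∈ G.edges := ⟨he, fun x hx => ⟨heHa hx, heX.notMem_of_mem_left hx⟩⟩
    obtain ⟨C, hC, heC⟩ := G.exists_isCC_superset
      ((τ.finite.subset (τ.part_carrier_subset a)).subset Set.inter_subset_left)
      ((τ.part a).edges_nonempty e he) (G.edges_sub e heG) (connIn_of_mem heG)
    obtain ⟨Y, hY, hCY⟩ := (h B X hB hX).2 a ha C hC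
    exact ⟨Y, hY, heC.trans hCY⟩
  · obtain ⟨Y, hY, hHaY⟩ := (h B X hB hX).1 a ha
    exact ⟨Y, hY, heHa.trans hHaY⟩

lemma IsStrictTeam.connectedIn_edge (h : τ.IsStrictTeam) {a : A} {e : Set α}
    (he : e ∈ (τ.part a).edges) : τ.coord.ConnectedIn e := by
  have hecoord : e ⊆ τ.coord.carrier := ((τ.part a).edges_sub e he).trans (τ.part_carrier_subset a)
  set X : A → Set α := fun b => (τ.part b).carrier \ e
  set B : Set A := {b | (X b).Nonempty}
  have hroots : ⋃ b ∈ B, X b = τ.coord.carrier \ e := by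
    calc ⋃ b ∈ B, X b = ⋃ b, X b := by
          ext x
          simp only [Set.mem_iUnion, exists_prop]
          exact ⟨fun ⟨b, _, hx⟩ => ⟨b, hx⟩, fun ⟨b, hx⟩ => ⟨b, ⟨x, hx⟩, hx⟩⟩
      _ = τ.coord.carrier \ e := by rw [← Set.iUnion_sdiff, τ.union]
  rcases B.eq_empty_or_nonempty with hB | hB
  · have hcoord : τ.coord.carrier = e := by
      rw [hB, Set.biUnion_empty, eq_comm, Set.sdiff_eq_empty] at hroots
      exact hroots.antisymm hecoord
    exact hcoord ▸ τ.coord_connected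
  · obtain ⟨Y, hY, heY⟩ := h.exists_isCC_superset_of_mem_edges hB
      (fun b hb => ⟨hb, Set.sdiff_subset⟩) he Set.disjoint_sdiff_right
    have hYe : Y = e := by
      refine (hY.2.1.trans ?_).antisymm heY
      rw [removed_carrier, hroots, Set.sdiff_sdiff_cancel_left hecoord]
    exact hYe ▸ hY.2.2.1.mono_edges fun f hf _ => hf.1

end Preteam

/-- A preteam is a strict team if and only if every hyperedge of every participating
hypergraph is connected in the coordinating hypergraph. -/
theorem stmt6 {α A : Type*} (τ : Preteam α A) :
    τ.IsStrictTeam ↔ ∀ a, ∀ e ∈ (τ.part a).edges, τ.coord.ConnectedIn e :=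
  ⟨fun h _ _ he => h.connectedIn_edge he, τ.isStrictTeam_of_connectedIn_edges⟩
end

section
/- The constructs of the ordered hypercube hypergraph 𝐂^X on X = {x₁ < ... < x_n}, defined by 𝐂^X = { {x₁,...,x_i} : 1 ≤ i ≤ n }, are in bijection with words of length n over the alphabet {+, −, •} whose first letter is +. -/
variable {α : Type*}

/-- `C` is a connected component of the hypergraph with edge set `E` restricted to the
carrier `H`. -/
def IsCCOn (E : Set (Set α)) (H : Set α) (C : Set α) : Prop :=
  C.Nonempty ∧ C ⊆ H ∧ ConnIn E C ∧ ∀ Z, C ⊆ Z → Z ⊆ H → ConnIn E Z → Z = C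

/-- `IsConstruct E H S` : `S` is (the tubing `ψ(T)` canonically and bijectively encoding) a
construct `T` of the hypergraph with edge set `E` and carrier `H`.  A construct with root
`Y` (nonempty, `Y ⊆ H`) grafts a construct on each connected component of `H \ Y`; its
tubing is `{H}` together with the tubings of its subtrees. -/
inductive IsConstruct (E : Set (Set α)) : Set α → Set (Set α) → Prop
  | node (H Y : Set α) (F : Set α → Set (Set α)) :
      Y.Nonempty → Y ⊆ H →
      (∀ C, IsCCOn E (H \ Y) C → IsConstruct E C (F C)) →
      IsConstruct E H (insert H (⋃ C ∈ {C | IsCCOn E (H \ Y) C}, F C))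

/-- The hyperedges of the hypercube hypergraph `𝐂^X` on the ordered set `X = Fin n`:
the initial segments `{x₁, …, x_i}` for `1 ≤ i ≤ n`. -/
def cubeEdges (n : ℕ) : Set (Set (Fin n)) :=
  {e | ∃ i : Fin n, e = {j | j ≤ i}}

/-!
For the edges `Iic i`, every initial segment is connected, and a connected set missing a point `c`
either lies below `c` or is a single point. So if the root `Y` of a construct on an initial segment
`H` has least element `k`, the components of `H \ Y` are `Iio k` (when nonempty) and the
singletons `{x}` with `k < x`, `x ∉ Y`. The word records `+` at `k`, `•` on the rest of `Y`, `−` on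
those singletons, and the word of the subconstruct on `Iio k` before `k`. Unfolding this recursion,
the tubes of the construct of a word are `H`, the segments `Iio j` cut off by each non-initial `+`,
and the singletons at the `−`s; the word can be read back from them.
-/

theorem cubeEdges_eq_range_Iic (n : ℕ) : cubeEdges n = Set.range Set.Iic :=
  Set.ext fun _ => exists_congr fun _ => eq_comm

section Hypergraph

variable {E : Set (Set α)} {Z : Set α}

theorem ConnIn.subset_or_disjoint (hZ : ConnIn E Z) {A : Set α} (hA : ∀ e ∈ E, e ⊆ Z → e ⊆ A) :
    Z ⊆ A ∨ Disjoint Z A := by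
  by_contra! h
  obtain ⟨hZA, hmeet⟩ := h
  obtain ⟨e, he, heZ, heA, -⟩ := hZ (Z ∩ A) (Z \ A) (Set.inter_union_sdiff Z A)
    Set.disjoint_sdiff_inter.symm (Set.not_disjoint_iff_nonempty_inter.1 hmeet)
    (Set.sdiff_nonempty.2 hZA)
  exact heA (Set.subset_inter heZ (hA e he heZ))

theorem ConnIn.subsingleton_of_forall_not_subset (hZ : ConnIn E Z) (hE : ∀ e ∈ E, ¬e ⊆ Z) :
    Z.Subsingleton := fun a ha _ hb =>
  ((hZ.subset_or_disjoint (A := {a}) fun e he heZ => absurd heZ (hE e he)).resolve_right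
    (Set.not_disjoint_iff.2 ⟨a, ha, rfl⟩) hb).symm

theorem connIn_singleton (E : Set (Set α)) (x : α) : ConnIn E {x} := by
  rintro X₁ X₂ hX hdisj ⟨a, ha⟩ ⟨b, hb⟩
  have ha' : a ∈ ({x} : Set α) := hX ▸ Or.inl ha
  have hb' : b ∈ ({x} : Set α) := hX ▸ Or.inr hb
  rw [Set.mem_singleton_iff] at ha' hb'
  subst ha' hb'
  exact absurd hb (Set.disjoint_left.1 hdisj ha)

theorem not_isCCOn_empty (E : Set (Set α)) (C : Set α) : ¬IsCCOn E ∅ C :=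
  fun h => h.1.ne_empty (Set.subset_empty_iff.1 h.2.1)

theorem isConstruct_singleton (E : Set (Set α)) (x : α) : IsConstruct E {x} {{x}} := by
  have h := IsConstruct.node (E := E) {x} {x} (fun _ => ∅) (Set.singleton_nonempty x) subset_rfl
    fun C hC => absurd (by simpa using hC) (not_isCCOn_empty E C)
  simpa [not_isCCOn_empty] using h

theorem IsConstruct.eq_singleton {x : α} {S : Set (Set α)} (h : IsConstruct E {x} S) :
    S = {{x}} := by
  cases h with
  | node _ Y F hY hYx _ =>
    obtain rfl := (Set.subset_singleton_iff_eq.1 hYx).resolve_left hY.ne_empty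
    simp [not_isCCOn_empty]

end Hypergraph

section InitialSegments

variable [LinearOrder α] {H Y Z : Set α}

theorem connIn_range_Iic_of_isLowerSet (hZ : IsLowerSet Z) : ConnIn (Set.range Set.Iic) Z := by
  rintro X₁ X₂ hX hdisj ⟨a, ha⟩ ⟨b, hb⟩
  have hmax : max a b ∈ Z := by
    rcases max_choice a b with h | h <;> rw [h, ← hX]
    exacts [Or.inl ha, Or.inr hb]
  refine ⟨Set.Iic (max a b), ⟨_, rfl⟩, hZ.Iic_subset hmax, fun h => ?_, fun h => ?_⟩
  · exact Set.disjoint_left.1 hdisj (h (le_max_right a b)) hb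
  · exact Set.disjoint_left.1 hdisj ha (h (le_max_left a b))

theorem ConnIn.subset_Iio_or_subsingleton (hZ : ConnIn (Set.range Set.Iic) Z) {c : α}
    (hc : c ∉ Z) : Z ⊆ Set.Iio c ∨ Z.Subsingleton := by
  have hedge : ∀ e ∈ Set.range Set.Iic, e ⊆ Z → e ⊆ Set.Iio c := by
    rintro _ ⟨i, rfl⟩ hi
    exact Set.Iic_subset_Iio.2 (lt_of_not_ge fun hci => hc (hi hci))
  refine (hZ.subset_or_disjoint hedge).imp_right fun hdisj =>
    hZ.subsingleton_of_forall_not_subset ?_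
  rintro _ ⟨i, rfl⟩ hi
  exact Set.disjoint_left.1 hdisj (hi le_rfl) (hedge _ ⟨i, rfl⟩ hi le_rfl)

theorem isCCOn_range_Iic_sdiff_iff {C : Set α} {k : α} (hH : IsLowerSet H) (hYH : Y ⊆ H)
    (hk : IsLeast Y k) :
    IsCCOn (Set.range Set.Iic) (H \ Y) C ↔
      (C = Set.Iio k ∧ C.Nonempty) ∨ ∃ x ∈ H \ Y, k < x ∧ C = {x} := by
  have hkH : k ∉ H \ Y := fun h => h.2 hk.1
  have hIio : Set.Iio k ⊆ H \ Y := fun y hy =>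
    ⟨hH hy.le (hYH hk.1), fun hyY => (hk.2 hyY).not_gt hy⟩
  have hsplit : ∀ Z, ConnIn (Set.range Set.Iic) Z → Z ⊆ H \ Y →
      Z ⊆ Set.Iio k ∨ Z.Subsingleton := fun Z hZ hZH =>
    hZ.subset_Iio_or_subsingleton fun h => hkH (hZH h)
  constructor
  · rintro ⟨hne, hCH, hC, hCmax⟩
    by_cases hCk : C ⊆ Set.Iio k
    · exact Or.inl ⟨(hCmax _ hCk hIio (connIn_range_Iic_of_isLowerSet (isLowerSet_Iio k))).symm,
        hne⟩
    obtain ⟨x, hx⟩ := hne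
    obtain rfl := ((hsplit C hC hCH).resolve_left hCk).eq_singleton_of_mem hx
    have hkx : k ≤ x := not_lt.1 fun h => hCk (Set.singleton_subset_iff.2 h)
    exact Or.inr ⟨x, hCH hx, hkx.lt_of_ne fun h => hkH (h ▸ hCH hx), rfl⟩
  · rintro (⟨rfl, a, ha⟩ | ⟨x, hx, hkx, rfl⟩)
    · refine ⟨⟨a, ha⟩, hIio, connIn_range_Iic_of_isLowerSet (isLowerSet_Iio k),
        fun Z hCZ hZH hZ => ?_⟩
      rcases hsplit Z hZ hZH with h | h
      · exact h.antisymm hCZ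
      · rw [h.eq_singleton_of_mem (hCZ ha), (h.anti hCZ).eq_singleton_of_mem ha]
    · refine ⟨Set.singleton_nonempty x, Set.singleton_subset_iff.2 hx, connIn_singleton _ x,
        fun Z hxZ hZH hZ => ?_⟩
      rcases hsplit Z hZ hZH with h | h
      · exact absurd (h (hxZ rfl)) hkx.not_gt
      · exact h.eq_singleton_of_mem (hxZ rfl)

theorem IsGreatest.isLeast_root {w : α → Fin 3} {k : α} (hk : IsGreatest {j ∈ H | w j = 0} k) :
    IsLeast {x ∈ H | k ≤ x ∧ w x ≠ 1} k :=
  ⟨⟨hk.1.1, le_rfl, by simp [hk.1.2]⟩, fun _ hx => hx.2.1⟩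

end InitialSegments

section Words

variable [LinearOrder α] [OrderBot α] {H : Set α} {w w' : α → Fin 3} {k : α}

/-- The letters `0, 1, 2 : Fin 3` stand for `+, −, •`. -/
def wordTubing (w : α → Fin 3) (H : Set α) : Set (Set α) :=
  insert H (Set.Iio '' {j ∈ H | w j = 0 ∧ j ≠ ⊥} ∪ (fun x => {x}) '' {x ∈ H | w x = 1})

theorem mem_wordTubing {A : Set α} :
    A ∈ wordTubing w H ↔
      A = H ∨ (∃ j ∈ H, w j = 0 ∧ j ≠ ⊥ ∧ Set.Iio j = A) ∨ ∃ x ∈ H, w x = 1 ∧ {x} = A := by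
  simp only [wordTubing, Set.mem_insert_iff, Set.mem_union, Set.mem_image, Set.mem_sep_iff,
    and_assoc]

theorem wordTubing_congr (h : Set.EqOn w w' H) : wordTubing w H = wordTubing w' H := by
  unfold wordTubing
  congr 3 <;> ext j <;> simp only [Set.mem_sep_iff] <;>
    exact and_congr_right fun hj => by rw [h hj]

theorem wordTubing_singleton {x : α} (hx : w x = 1) : wordTubing w {x} = {{x}} := by
  ext A
  simp [mem_wordTubing, hx, eq_comm]

theorem singleton_mem_wordTubing_iff (hH : IsLowerSet H) {x : α} (hx : x ∈ H) (hxb : x ≠ ⊥) :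
    {x} ∈ wordTubing w H ↔ w x = 1 := by
  refine ⟨fun h => ?_, fun h => mem_wordTubing.2 (Or.inr (Or.inr ⟨x, hx, h, rfl⟩))⟩
  rcases mem_wordTubing.1 h with hxH | ⟨j, -, -, hjb, hjx⟩ | ⟨y, -, hwy, hyx⟩
  · have hbot : ⊥ ∈ H := hH.bot_mem.2 ⟨x, hx⟩
    rw [← hxH] at hbot
    exact (hxb hbot.symm).elim
  · have hbot : ⊥ ∈ Set.Iio j := bot_lt_iff_ne_bot.2 hjb
    rw [hjx] at hbot
    exact (hxb hbot.symm).elim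
  · rwa [← Set.singleton_eq_singleton_iff.1 hyx]

theorem Iio_mem_wordTubing_iff (hw : w ⊥ = 0) {x : α} (hx : x ∈ H) (hxb : x ≠ ⊥) :
    Set.Iio x ∈ wordTubing w H ↔ w x = 0 := by
  refine ⟨fun h => ?_, fun h => mem_wordTubing.2 (Or.inr (Or.inl ⟨x, hx, h, hxb, rfl⟩))⟩
  rcases mem_wordTubing.1 h with hxH | ⟨j, -, hwj, -, hjx⟩ | ⟨y, -, hwy, hyx⟩
  · rw [← hxH] at hx
    exact absurd hx (lt_irrefl x)
  · rwa [← Set.Iio_inj.1 hjx]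
  · have hbot : ⊥ ∈ Set.Iio x := bot_lt_iff_ne_bot.2 hxb
    rw [← hyx, Set.mem_singleton_iff] at hbot
    rw [← hbot, hw] at hwy
    exact absurd hwy (by decide)

theorem eqOn_of_wordTubing_eq (hH : IsLowerSet H) (hw : w ⊥ = 0) (hw' : w' ⊥ = 0)
    (h : wordTubing w H = wordTubing w' H) : Set.EqOn w w' H := by
  intro x hx
  rcases eq_or_ne x ⊥ with rfl | hxb
  · rw [hw, hw']
  have h0 : w x = 0 ↔ w' x = 0 := by
    rw [← Iio_mem_wordTubing_iff hw hx hxb, ← Iio_mem_wordTubing_iff hw' hx hxb, h]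
  have h1 : w x = 1 ↔ w' x = 1 := by
    rw [← singleton_mem_wordTubing_iff hH hx hxb, ← singleton_mem_wordTubing_iff hH hx hxb, h]
  have hFin3 : ∀ a b : Fin 3, (a = 0 ↔ b = 0) → (a = 1 ↔ b = 1) → a = b := by decide
  exact hFin3 _ _ h0 h1

/-- The recursion of the encoding: the root is the last `+` of `w` on `H` with the `•`s after it. -/
theorem insert_biUnion_wordTubing (hH : IsLowerSet H) (hk : IsGreatest {j ∈ H | w j = 0} k) :
    insert H (⋃ C ∈ {C | IsCCOn (Set.range Set.Iic) (H \ {x ∈ H | k ≤ x ∧ w x ≠ 1}) C},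
      wordTubing w C) = wordTubing w H := by
  have hcomp := fun C => isCCOn_range_Iic_sdiff_iff (C := C) hH (Set.sep_subset _ _) hk.isLeast_root
  obtain ⟨⟨hkH, hwk⟩, hlast⟩ := hk
  have hIio : k ≠ ⊥ → IsCCOn (Set.range Set.Iic) (H \ {x ∈ H | k ≤ x ∧ w x ≠ 1}) (Set.Iio k) :=
    fun hkb => (hcomp _).2 (Or.inl ⟨rfl, ⊥, bot_lt_iff_ne_bot.2 hkb⟩)
  ext A
  rw [mem_wordTubing, Set.mem_insert_iff]
  refine or_congr_right ⟨?_, ?_⟩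
  · simp only [Set.mem_iUnion, Set.mem_ofPred_eq, exists_prop]
    rintro ⟨C, hC, hA⟩
    rcases (hcomp C).1 hC with ⟨rfl, a, ha⟩ | ⟨x, ⟨hxH, hxY⟩, hkx, rfl⟩
    · rcases mem_wordTubing.1 hA with rfl | ⟨j, hj, hwj, hjb, rfl⟩ | ⟨x, hx, hwx, rfl⟩
      · exact Or.inl ⟨k, hkH, hwk, ne_bot_of_gt ha, rfl⟩
      · exact Or.inl ⟨j, hH hj.le hkH, hwj, hjb, rfl⟩
      · exact Or.inr ⟨x, hH hx.le hkH, hwx, rfl⟩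
    · have hwx : w x = 1 := not_not.1 fun h => hxY ⟨hxH, hkx.le, h⟩
      rw [wordTubing_singleton hwx, Set.mem_singleton_iff] at hA
      exact Or.inr ⟨x, hxH, hwx, hA.symm⟩
  · simp only [Set.mem_iUnion, exists_prop]
    rintro (⟨j, hjH, hwj, hjb, rfl⟩ | ⟨x, hxH, hwx, rfl⟩)
    · rcases (hlast ⟨hjH, hwj⟩).lt_or_eq with hjk | rfl
      · exact ⟨Set.Iio k, hIio (ne_bot_of_gt hjk),
          mem_wordTubing.2 (Or.inr (Or.inl ⟨j, hjk, hwj, hjb, rfl⟩))⟩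
      · exact ⟨Set.Iio j, hIio hjb, Set.mem_insert _ _⟩
    · rcases lt_or_gt_of_ne (fun h : x = k => by simp [h, hwk] at hwx) with hxk | hkx
      · exact ⟨Set.Iio k, hIio (ne_bot_of_gt hxk),
          mem_wordTubing.2 (Or.inr (Or.inr ⟨x, hxk, hwx, rfl⟩))⟩
      · refine ⟨{x}, (hcomp _).2 (Or.inr ⟨x, ⟨hxH, fun h => h.2.2 hwx⟩, hkx, rfl⟩), ?_⟩
        rw [wordTubing_singleton hwx]
        exact Set.mem_singleton _

theorem exists_word_extending {Y : Set α} (hYH : Y ⊆ H) (hk : IsLeast Y k) (hw' : w' ⊥ = 0) :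
    ∃ w : α → Fin 3, w ⊥ = 0 ∧ IsGreatest {j ∈ H | w j = 0} k ∧
      Y = {x ∈ H | k ≤ x ∧ w x ≠ 1} ∧ Set.EqOn w w' (Set.Iio k) := by
  classical
  refine ⟨fun x => if x < k then w' x else if x = k then 0 else if x ∈ Y then 2 else 1,
    ?_, ⟨⟨hYH hk.1, by simp⟩, fun j ⟨_, hwj⟩ => ?_⟩, ?_, fun x hx => if_pos hx⟩
  · rcases (bot_le : ⊥ ≤ k).lt_or_eq with hk0 | hk0
    · simp [hk0, hw']
    · simp [hk0]
  · by_contra! hkj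
    simp only [hkj.not_gt, hkj.ne', if_false] at hwj
    split_ifs at hwj <;> simp at hwj
  · ext x
    simp only [Set.mem_sep_iff]
    constructor
    · intro hx
      have hkx := hk.2 hx
      refine ⟨hYH hx, hkx, ?_⟩
      simp only [hkx.not_gt, if_false, hx]
      split_ifs <;> decide
    · rintro ⟨-, hkx, hwx⟩
      rcases hkx.lt_or_eq with hkx | rfl
      · simp only [hkx.not_gt, hkx.ne', if_false] at hwx
        by_contra hxY
        simp [hxY] at hwx
      · exact hk.1

end Words

section FiniteWords

variable [LinearOrder α] [OrderBot α] [Finite α]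

theorem isConstruct_wordTubing {w : α → Fin 3} (hw : w ⊥ = 0) (H : Set α) (hH : IsLowerSet H)
    (hne : H.Nonempty) : IsConstruct (Set.range Set.Iic) H (wordTubing w H) := by
  induction H using WellFoundedLT.induction with
  | _ H ih =>
  obtain ⟨k, hkH, hlast⟩ :=
    Set.exists_max_image {j ∈ H | w j = 0} id (Set.toFinite _) ⟨⊥, hH.bot_mem.2 hne, hw⟩
  have hk : IsGreatest {j ∈ H | w j = 0} k := ⟨hkH, hlast⟩
  have hY := hk.isLeast_root
  rw [← insert_biUnion_wordTubing hH hk]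
  refine IsConstruct.node H _ _ ⟨k, hY.1⟩ (Set.sep_subset _ _) fun C hC => ?_
  rcases (isCCOn_range_Iic_sdiff_iff hH (Set.sep_subset _ _) hY).1 hC with
    ⟨rfl, hne⟩ | ⟨x, ⟨hxH, hxY⟩, hkx, rfl⟩
  · have hIio : Set.Iio k ⊂ H :=
      ssubset_of_subset_not_subset (fun y hy => hH hy.le hkH.1) fun h => lt_irrefl k (h hkH.1)
    exact ih _ hIio (isLowerSet_Iio k) hne
  · rw [wordTubing_singleton (not_not.1 fun h => hxY ⟨hxH, hkx.le, h⟩)]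
    exact isConstruct_singleton _ x

theorem IsConstruct.exists_wordTubing_eq {H : Set α} {S : Set (Set α)}
    (hS : IsConstruct (Set.range Set.Iic) H S) (hH : IsLowerSet H) :
    ∃ w : α → Fin 3, w ⊥ = 0 ∧ S = wordTubing w H := by
  induction hS with
  | node H Y F hYne hYH hF ih =>
  obtain ⟨k, hkY, hkmin⟩ := Set.exists_min_image Y id (Set.toFinite Y) hYne
  have hk : IsLeast Y k := ⟨hkY, hkmin⟩
  have hcomp := fun C => isCCOn_range_Iic_sdiff_iff (C := C) hH hYH hk
  obtain ⟨w', hw'b, hw'⟩ :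
      ∃ w' : α → Fin 3, w' ⊥ = 0 ∧ (k ≠ ⊥ → F (Set.Iio k) = wordTubing w' (Set.Iio k)) := by
    by_cases hkb : k = ⊥
    · exact ⟨0, rfl, fun h => absurd hkb h⟩
    obtain ⟨w', hw'b, hw'⟩ :=
      ih _ ((hcomp _).2 (Or.inl ⟨rfl, ⊥, bot_lt_iff_ne_bot.2 hkb⟩)) (isLowerSet_Iio k)
    exact ⟨w', hw'b, fun _ => hw'⟩
  obtain ⟨w, hwb, hlast, rfl, hww'⟩ := exists_word_extending hYH hk hw'b
  refine ⟨w, hwb, ?_⟩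
  rw [← insert_biUnion_wordTubing hH hlast]
  congr 1
  refine Set.iUnion₂_congr fun C hC => ?_
  rcases (hcomp C).1 hC with ⟨rfl, a, ha⟩ | ⟨x, ⟨hxH, hxY⟩, hkx, rfl⟩
  · rw [hw' (ne_bot_of_gt ha), wordTubing_congr hww'.symm]
  · rw [(hF _ hC).eq_singleton, wordTubing_singleton (not_not.1 fun h => hxY ⟨hxH, hkx.le, h⟩)]

variable (α) in
noncomputable def constructEquivWord :
    {S : Set (Set α) // IsConstruct (Set.range Set.Iic) Set.univ S} ≃ {w : α → Fin 3 // w ⊥ = 0} :=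
  (Equiv.ofBijective
    (fun w => ⟨wordTubing w.1 Set.univ,
      isConstruct_wordTubing w.2 Set.univ isLowerSet_univ ⟨⊥, trivial⟩⟩)
    ⟨fun w w' h => Subtype.ext <| funext fun x =>
        eqOn_of_wordTubing_eq isLowerSet_univ w.2 w'.2 (congrArg Subtype.val h) (Set.mem_univ x),
      fun S =>
        let ⟨w, hw, hS⟩ := S.2.exists_wordTubing_eq isLowerSet_univ
        ⟨⟨w, hw⟩, Subtype.ext hS.symm⟩⟩).symm

end FiniteWords

/-- The constructs of the hypercube hypergraph `𝐂^X` on `X = {x₁ < ⋯ < x_n}` are in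
bijection with the words of length `n` over the alphabet `{+, −, •}` (encoded as `Fin 3`,
with `0 = +`) whose first letter is `+`. -/
theorem stmt15 (n : ℕ) (hn : 0 < n) :
    Nonempty
      ({S : Set (Set (Fin n)) // IsConstruct (cubeEdges n) Set.univ S} ≃
        {w : Fin n → Fin 3 // w ⟨0, hn⟩ = 0}) := by
  obtain ⟨m, rfl⟩ : ∃ m, n = m + 1 := ⟨n - 1, by omega⟩
  rw [cubeEdges_eq_range_Iic]
  exact ⟨constructEquivWord (Fin (m + 1))⟩
end
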